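/- arXiv:1809.06233 — 2 statements merged into one kernel-verified Lean document; each statement's English description precedes it below -/
import Mathlib

section
/- Uniform ADN theorem: Let γ be a precomplete numbering of a set S, and suppose δ : ℕ ⇀ ℕ is a partial computable diagonal function for γ. Then there exists a total computable function f : ℕ → ℕ such that for every e and n: (1) if φ_e(n) is defined then f(⟨e,n⟩) ~γ φ_e(n), and (2) if φ_e(n) is undefined then δ(f(⟨e,n⟩)) is undefined, where ⟨·,·⟩ is a computable pairing function. That is, for every fixed e the function n ↦ f(⟨e,n⟩) totalizes φ_e avoiding δ. -/
/-!
Let `F` totalize the universal function modulo `~γ`. By the recursion theorem there is a code `c`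
whose computation on `x` races `ψ x` against `δ (F ⟨c, x⟩)`, returning whichever converges first;
put `f x = F ⟨c, x⟩`, so that `f x ~γ φ_c(x)` whenever `φ_c(x)` is defined. A value won by `δ`
would give `δ (f x) ~γ f x`, which diagonality forbids; so `φ_c(x)` is always won by `ψ x`, and
it converges as soon as `ψ x` or `δ (f x)` does.
-/

/-- The `e`-th unary partial computable function, in the standard numbering via codes. -/
def phi (e : ℕ) : ℕ →. ℕ := (Denumerable.ofNat Nat.Partrec.Code e).eval

/-- A numbering `γ : ℕ → S` (a surjection) is precomplete if every partial computable
function can be totalized modulo `~γ`. -/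
def Precomplete {S : Type*} (γ : ℕ → S) : Prop :=
  ∀ ψ : ℕ →. ℕ, Nat.Partrec ψ →
    ∃ f : ℕ → ℕ, Computable f ∧ ∀ n : ℕ, ∀ y ∈ ψ n, γ (f n) = γ y

/-- A partial function `δ` is a diagonal function for the numbering `γ` if
`δ(x) ≁γ x` for every `x` in the domain of `δ`. -/
def DiagonalFn {S : Type*} (γ : ℕ → S) (δ : ℕ →. ℕ) : Prop :=
  ∀ x : ℕ, ∀ y ∈ δ x, γ y ≠ γ x

open Nat.Partrec (Code)
open Encodable Denumerable

theorem partrec₂_phi : Partrec₂ phi :=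
  Code.eval_part.comp ((Computable.ofNat Code).comp Computable.fst) Computable.snd

theorem Nat.Partrec.phi_unpair : Nat.Partrec fun m => phi m.unpair.1 m.unpair.2 :=
  Partrec.nat_iff.1 (partrec₂_phi.comp (Computable.fst.comp .unpair) (Computable.snd.comp .unpair))

namespace Precomplete

variable {S : Type*} {γ : ℕ → S}

theorem exists_totalizer_phi (hpre : Precomplete γ) :
    ∃ F : ℕ → ℕ, Computable F ∧ ∀ e n, ∀ y ∈ phi e n, γ (F (Nat.pair e n)) = γ y := by
  obtain ⟨F, hF, hFspec⟩ := hpre _ Nat.Partrec.phi_unpair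
  exact ⟨F, hF, fun e n y hy => hFspec _ y (by simpa only [Nat.unpair_pair] using hy)⟩

theorem exists_totalizer_avoiding (hpre : Precomplete γ) {δ : ℕ →. ℕ} (hδ : Nat.Partrec δ)
    (hdiag : DiagonalFn γ δ) {ψ : ℕ →. ℕ} (hψ : Nat.Partrec ψ) :
    ∃ f : ℕ → ℕ, Computable f ∧ ∀ x,
      (∀ y ∈ ψ x, γ (f x) = γ y) ∧ (¬ (ψ x).Dom → ¬ (δ (f x)).Dom) := by
  obtain ⟨F, hF, hFspec⟩ := hpre.exists_totalizer_phi
  have hFc : Computable fun p : Code × ℕ => F (Nat.pair (encode p.1) p.2) :=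
    hF.comp (Primrec₂.natPair.to_comp.comp (Computable.encode.comp .fst) .snd)
  obtain ⟨race, hrace, hrace_spec⟩ := Partrec.merge'
    ((Partrec.nat_iff.2 hψ).comp Computable.snd) ((Partrec.nat_iff.2 hδ).comp hFc)
  obtain ⟨c, hc⟩ := Code.fixed_point₂ hrace.to₂
  refine ⟨fun x => F (Nat.pair (encode c) x),
    hFc.comp ((Computable.const c).pair Computable.id), fun x => ?_⟩
  obtain ⟨hmem, hdom⟩ := hrace_spec (c, x)
  have hγ : ∀ v ∈ race (c, x), γ (F (Nat.pair (encode c) x)) = γ v := fun v hv =>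
    hFspec _ _ v (by simpa only [phi, ofNat_encode, hc] using hv)
  have hwin : ∀ v ∈ race (c, x), v ∈ ψ x := fun v hv =>
    (hmem v hv).resolve_right fun hvδ => hdiag _ v hvδ (hγ v hv).symm
  refine ⟨fun y hy => ?_, fun hψx hδx => ?_⟩
  · have hv := Part.get_mem (hdom.2 (.inl (Part.dom_iff_mem.2 ⟨y, hy⟩)))
    rw [hγ _ hv, Part.mem_unique (hwin _ hv) hy]
  · exact hψx (hwin _ (Part.get_mem (hdom.2 (.inr hδx)))).1

end Precomplete

theorem visser_ADN_uniform_general {S : Type*} (γ : ℕ → S)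
    (hpre : Precomplete γ) (δ : ℕ →. ℕ) (hδ : Nat.Partrec δ) (hdiag : DiagonalFn γ δ) :
    ∃ f : ℕ → ℕ, Computable f ∧ ∀ e n : ℕ,
      (∀ y ∈ phi e n, γ (f (Nat.pair e n)) = γ y) ∧
      (¬ (phi e n).Dom → ¬ (δ (f (Nat.pair e n))).Dom) := by
  obtain ⟨f, hf, hspec⟩ := hpre.exists_totalizer_avoiding hδ hdiag Nat.Partrec.phi_unpair
  refine ⟨f, hf, fun e n => ?_⟩
  simpa only [Nat.unpair_pair] using hspec (Nat.pair e n)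

/-- The uniform ADN theorem: a single total computable `f` such that for every `e`,
the function `n ↦ f ⟨e, n⟩` totalizes `φ_e` avoiding the diagonal function `δ`. -/
theorem visser_ADN_uniform {S : Type*} (γ : ℕ → S) (hsurj : Function.Surjective γ)
    (hpre : Precomplete γ) (δ : ℕ →. ℕ) (hδ : Nat.Partrec δ) (hdiag : DiagonalFn γ δ) :
    ∃ f : ℕ → ℕ, Computable f ∧ ∀ e n : ℕ,
      (∀ y ∈ phi e n, γ (f (Nat.pair e n)) = γ y) ∧
      (¬ (phi e n).Dom → ¬ (δ (f (Nat.pair e n))).Dom) :=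
  visser_ADN_uniform_general γ hpre δ hδ hdiag
end

section
/- Arslanov's completeness criterion for precomplete numberings: Suppose γ is a precomplete numbering of a set S, and A ⊆ ℕ is a computably enumerable set such that the halting set ∅' is not Turing reducible to A. If g : ℕ → ℕ is a total function that is Turing reducible to A, then g has a fixed point modulo ~γ, i.e. there exists n ∈ ℕ such that g(n) ~γ n. -/
/-- The halting set `∅' = {e : φ_e(e) is defined}`. -/
def haltingSet : Set ℕ := {e : ℕ | (phi e e).Dom}

open Classical in
/-- The characteristic function of a set `A ⊆ ℕ`, as a (total) partial function. -/
noncomputable def chi (A : Set ℕ) : ℕ →. ℕ :=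
  fun n => Part.some (if n ∈ A then 1 else 0)

/-- Partial functions computable relative to an oracle `O : ℕ →. ℕ`: the relativized
version of `Nat.Partrec`. -/
inductive RecursiveInOracle (O : ℕ →. ℕ) : (ℕ →. ℕ) → Prop
  | oracle : RecursiveInOracle O O
  | zero : RecursiveInOracle O (pure 0)
  | succ : RecursiveInOracle O Nat.succ
  | left : RecursiveInOracle O ↑fun n : ℕ => n.unpair.1
  | right : RecursiveInOracle O ↑fun n : ℕ => n.unpair.2
  | pair {f g : ℕ →. ℕ} : RecursiveInOracle O f → RecursiveInOracle O g →
      RecursiveInOracle O fun n => Nat.pair <$> f n <*> g n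
  | comp {f g : ℕ →. ℕ} : RecursiveInOracle O f → RecursiveInOracle O g →
      RecursiveInOracle O fun n => g n >>= f
  | prec {f g : ℕ →. ℕ} : RecursiveInOracle O f → RecursiveInOracle O g →
      RecursiveInOracle O (Nat.unpaired fun a n =>
        n.rec (f a) fun y IH => do let i ← IH; g (Nat.pair a (Nat.pair y i)))
  | rfind {f : ℕ →. ℕ} : RecursiveInOracle O f →
      RecursiveInOracle O fun a => Nat.rfind fun n => (fun m => m = 0) <$> f (Nat.pair a n)

/-- A set `A ⊆ ℕ` is computably enumerable if it is the domain of a partial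
computable function. -/
def CE (A : Set ℕ) : Prop := ∃ ψ : ℕ →. ℕ, Nat.Partrec ψ ∧ ∀ n, n ∈ A ↔ (ψ n).Dom

/-!
Suppose `g` has no fixed point modulo `γ`. Since `A` is c.e., the `A`-computation of `g` can be
run in stages, with the part of `A` enumerated by stage `s` as the oracle. A stage-`t`
computation all of whose oracle queries are answered correctly gives the true value, and it
never changes afterwards because `A` only grows. By the recursion theorem for precomplete
numberings there is a computable `ν` with `ν x ~γ Ψ(x, ν x)`, where `Ψ(x, y)` is the stage
approximation of `g y` at the stage where `x` enters `∅'`. To decide `x ∈ ∅'` using `A`,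
search for a stage `t` at which the computation of `g (ν x)` is confirmed by `A`: then
`x ∈ ∅'` iff `x` has entered by stage `t`, for if it entered only later, then
`Ψ(x, ν x) = g (ν x)` and `ν x` would be a fixed point. So `∅' ≤_T A`.
-/

open Filter

namespace RecursiveInOracle

variable {O : ℕ →. ℕ}

theorem of_partrec {f : ℕ →. ℕ} (hf : Nat.Partrec f) : RecursiveInOracle O f := by
  induction hf with
  | zero => exact zero
  | succ => exact succ
  | left => exact left
  | right => exact right
  | pair _ _ ihf ihg => exact pair ihf ihg
  | comp _ _ ihf ihg => exact comp ihf ihg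
  | prec _ _ ihf ihg => exact prec ihf ihg
  | rfind _ ihf => exact rfind ihf

theorem of_eq {f g : ℕ →. ℕ} (hf : RecursiveInOracle O f) (H : ∀ n, f n = g n) :
    RecursiveInOracle O g :=
  funext H ▸ hf

theorem of_computable {f : ℕ → ℕ} (hf : Computable f) :
    RecursiveInOracle O fun n => Part.some (f n) :=
  of_partrec (Partrec.nat_iff.1 hf.partrec)

theorem comp_total {f g : ℕ → ℕ} (hf : RecursiveInOracle O fun n => Part.some (f n))
    (hg : RecursiveInOracle O fun n => Part.some (g n)) :
    RecursiveInOracle O fun n => Part.some (f (g n)) := by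
  simpa using comp hf hg

theorem comp₂ {F : ℕ → ℕ → ℕ} (hF : Computable₂ F) {f g : ℕ → ℕ}
    (hf : RecursiveInOracle O fun n => Part.some (f n))
    (hg : RecursiveInOracle O fun n => Part.some (g n)) :
    RecursiveInOracle O fun n => Part.some (F (f n) (g n)) := by
  have hF' : Computable fun m : ℕ => F m.unpair.1 m.unpair.2 :=
    hF.comp (Computable.fst.comp Computable.unpair) (Computable.snd.comp Computable.unpair)
  simpa [Seq.seq] using comp (of_computable hF') (pair hf hg)

theorem rfind_bind {f : ℕ → ℕ} (hf : RecursiveInOracle O fun n => Part.some (f n))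
    {K : ℕ → ℕ → ℕ} (hK : Computable₂ K) :
    RecursiveInOracle O fun x =>
      (Nat.rfind fun t => Part.some (decide (f (Nat.pair x t) = 0))).bind
        fun t => Part.some (K x t) := by
  have hK' : Computable fun m : ℕ => K m.unpair.1 m.unpair.2 :=
    hK.comp (Computable.fst.comp Computable.unpair) (Computable.snd.comp Computable.unpair)
  simpa [Seq.seq] using comp (of_computable hK') (pair (of_computable Computable.id) (rfind hf))

theorem sum_range {c : ℕ → ℕ} :
    RecursiveInOracle (fun n => Part.some (c n))
      fun u => Part.some (∑ q ∈ Finset.range u, c q) := by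
  have hstep : RecursiveInOracle (fun n => Part.some (c n))
      fun m => Part.some (c m.unpair.2.unpair.1 + m.unpair.2.unpair.2) :=
    comp₂ Primrec.nat_add.to_comp
      (comp_total oracle (of_computable (Computable.fst.comp
        (Computable.unpair.comp (Computable.snd.comp Computable.unpair)))))
      (of_computable (Computable.snd.comp (Computable.unpair.comp
        (Computable.snd.comp Computable.unpair))))
  have hrec := comp (prec zero hstep) (of_computable (Primrec₂.natPair.to_comp.comp
    (Computable.const 0) Computable.id))
  refine of_eq hrec fun u => ?_
  simp only [Part.bind_eq_bind, Part.bind_some, id, Nat.unpaired, Nat.unpair_pair]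
  induction u with
  | zero => rfl
  | succ u ih => simp_all [Finset.sum_range_succ, add_comm]

end RecursiveInOracle

structure IsEnumeration (A : Set ℕ) (D : ℕ → ℕ → Bool) : Prop where
  sound {s n : ℕ} : D s n = true → n ∈ A
  mono {s s' n : ℕ} : s ≤ s' → D s n = true → D s' n = true
  complete {n : ℕ} : n ∈ A → ∃ s, D s n = true

theorem CE.exists_enumeration {A : Set ℕ} (hA : CE A) :
    ∃ D : ℕ → ℕ → Bool, Primrec₂ D ∧ IsEnumeration A D := by
  obtain ⟨ψ, hψ, hA⟩ := hA
  obtain ⟨c, rfl⟩ := Nat.Partrec.Code.exists_code.1 hψ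
  refine ⟨fun s n => (c.evaln s n).isSome, ?_, ⟨fun h => ?_, fun hss h => ?_, fun h => ?_⟩⟩
  · exact (Primrec.option_isSome.comp (Nat.Partrec.Code.primrec_evaln.comp
      ((Primrec.fst.pair (Primrec.const c)).pair Primrec.snd))).to₂
  · obtain ⟨v, hv⟩ := Option.isSome_iff_exists.1 h
    exact (hA _).2 (Part.dom_iff_mem.2 ⟨v, Nat.Partrec.Code.evaln_sound hv⟩)
  · obtain ⟨v, hv⟩ := Option.isSome_iff_exists.1 h
    exact Option.isSome_iff_exists.2 ⟨v, Nat.Partrec.Code.evaln_mono hss hv⟩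
  · obtain ⟨v, hv⟩ := Part.dom_iff_mem.1 ((hA _).1 h)
    obtain ⟨s, hs⟩ := Nat.Partrec.Code.evaln_complete.1 hv
    exact ⟨s, Option.isSome_iff_exists.2 ⟨v, hs⟩⟩

theorem ce_haltingSet : CE haltingSet :=
  ⟨fun e => phi e e, Partrec.nat_iff.1 <| Nat.Partrec.Code.eval_part.comp
    (Computable.ofNat Nat.Partrec.Code) Computable.id, fun _ => Iff.rfl⟩

def AgreesBelow (A : Set ℕ) (D : ℕ → ℕ → Bool) (s u : ℕ) : Prop :=
  ∀ q < u, (D s q = true ↔ q ∈ A)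

theorem AgreesBelow.mono {A : Set ℕ} {D : ℕ → ℕ → Bool} {s u u' : ℕ}
    (h : AgreesBelow A D s u) (hu : u' ≤ u) : AgreesBelow A D s u' :=
  fun q hq => h q (hq.trans_le hu)

theorem agreesBelow_max_iff {A : Set ℕ} {D : ℕ → ℕ → Bool} {s u u' : ℕ} :
    AgreesBelow A D s (max u u') ↔ AgreesBelow A D s u ∧ AgreesBelow A D s u' := by
  simp only [AgreesBelow, lt_max_iff]
  exact ⟨fun h => ⟨fun q hq => h q (.inl hq), fun q hq => h q (.inr hq)⟩,
    fun h q hq => hq.elim (h.1 q) (h.2 q)⟩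

namespace IsEnumeration

variable {A : Set ℕ} {D : ℕ → ℕ → Bool} (hD : IsEnumeration A D)
include hD

theorem iff_of_le {t s q : ℕ} (h : D t q = true ↔ q ∈ A) (hts : t ≤ s) :
    D s q = true ↔ q ∈ A :=
  ⟨hD.sound, fun hq => hD.mono hts (h.2 hq)⟩

theorem eventually_iff (q : ℕ) : ∀ᶠ s in atTop, (D s q = true ↔ q ∈ A) := by
  by_cases hq : q ∈ A
  · obtain ⟨t, ht⟩ := hD.complete hq
    exact eventually_atTop.2 ⟨t, fun s hs => hD.iff_of_le (iff_of_true ht hq) hs⟩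
  · exact Eventually.of_forall fun s => iff_of_false (mt hD.sound hq) hq

theorem eventually_agreesBelow (u : ℕ) : ∀ᶠ s in atTop, AgreesBelow A D s u :=
  (Set.finite_Iio u).eventually_all.2 fun q _ => hD.eventually_iff q

end IsEnumeration

def firstZeroStep : Option (ℕ × ℕ) → Option (ℕ × ℕ) → Option (ℕ × ℕ)
  | some (0, u), _ => some (0, u)
  | some (_ + 1, u), r => r.map fun q => (q.1 + 1, max u q.2)
  | none, _ => none

open Primrec in
theorem Primrec.firstZeroStep : Primrec₂ firstZeroStep := by
  have h : Primrec₂ fun (o r : Option (ℕ × ℕ)) =>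
      Option.casesOn (motive := fun _ => Option (ℕ × ℕ)) o none fun p =>
        if p.1 = 0 then some (0, p.2) else r.map fun q => (q.1 + 1, max p.2 q.2) :=
    (option_casesOn fst (const none) <| (ite (Primrec.eq.comp (fst.comp snd) (const 0))
      (option_some.comp ((const 0).pair (snd.comp snd)))
      (option_map (snd.comp fst) <| ((succ.comp (fst.comp snd)).pair
        (nat_max.comp (snd.comp (snd.comp fst)) (snd.comp snd))).to₂)).to₂).to₂
  refine h.of_eq fun o r => ?_
  rcases o with _ | ⟨_ | v, u⟩ <;> rfl

/-- One stage of `Nat.rfind`: scan `f 0, …, f (k - 1)` for the first value `0`, accumulating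
the maximum of the uses. -/
def firstZero (f : ℕ → Option (ℕ × ℕ)) (k : ℕ) : Option (ℕ × ℕ) :=
  ((List.range k).map f).foldr firstZeroStep none

theorem firstZero_zero (f : ℕ → Option (ℕ × ℕ)) : firstZero f 0 = none := rfl

theorem firstZero_succ (f : ℕ → Option (ℕ × ℕ)) (k : ℕ) :
    firstZero f (k + 1) = firstZeroStep (f 0) (firstZero (fun n => f (n + 1)) k) := by
  simp [firstZero, List.range_succ_eq_map, Function.comp_def]

theorem firstZero_eq_some {f : ℕ → Option (ℕ × ℕ)} {k n U : ℕ}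
    (h : firstZero f k = some (n, U)) :
    n < k ∧ ∀ m ≤ n, ∃ v u, u ≤ U ∧ f m = some (v, u) ∧ (v = 0 ↔ m = n) := by
  induction k generalizing f n U with
  | zero => simp [firstZero_zero] at h
  | succ k ih =>
    rw [firstZero_succ] at h
    rcases hf0 : f 0 with _ | ⟨_ | v, u⟩ <;> rw [hf0] at h
    · cases h
    · cases h
      exact ⟨k.succ_pos, fun m hm => ⟨0, U, le_rfl, by rw [Nat.le_zero.1 hm, hf0], by simp_all⟩⟩
    · obtain ⟨⟨n, U'⟩, h', hnU⟩ := Option.map_eq_some_iff.1 h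
      cases hnU
      obtain ⟨hn, hm⟩ := ih h'
      refine ⟨by omega, fun m hmn => ?_⟩
      rcases m with _ | m
      · exact ⟨v + 1, u, le_max_left _ _, hf0, by simp⟩
      · obtain ⟨w, u', hu', hw, hwn⟩ := hm m (by omega)
        exact ⟨w, u', hu'.trans (le_max_right _ _), hw, by omega⟩

theorem firstZero_congr {f f' : ℕ → Option (ℕ × ℕ)} {k k' n U : ℕ}
    (h : firstZero f k = some (n, U)) (hf : ∀ m ≤ n, f' m = f m) (hk : n < k') :
    firstZero f' k' = some (n, U) := by
  induction k generalizing f f' k' n U with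
  | zero => simp [firstZero_zero] at h
  | succ k ih =>
    obtain ⟨k', rfl⟩ := Nat.exists_eq_add_one_of_ne_zero (by omega : k' ≠ 0)
    rw [firstZero_succ] at h ⊢
    rw [hf 0 (Nat.zero_le n)]
    rcases hf0 : f 0 with _ | ⟨_ | v, u⟩ <;> rw [hf0] at h
    · cases h
    · exact h
    · obtain ⟨⟨n, U'⟩, h', hnU⟩ := Option.map_eq_some_iff.1 h
      cases hnU
      simp only [firstZeroStep]
      rw [ih h' (fun m hm => hf (m + 1) (by omega)) (by omega)]
      rfl

theorem exists_firstZero_eq {f : ℕ → Option (ℕ × ℕ)} {k n : ℕ}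
    (hf : ∀ m ≤ n, ∃ v u, f m = some (v, u) ∧ (v = 0 ↔ m = n)) (hk : n < k) :
    ∃ U, firstZero f k = some (n, U) := by
  induction n generalizing f k with
  | zero =>
    obtain ⟨k, rfl⟩ := Nat.exists_eq_add_one_of_ne_zero (by omega : k ≠ 0)
    obtain ⟨v, u, hf0, hv⟩ := hf 0 le_rfl
    obtain rfl : v = 0 := hv.2 rfl
    exact ⟨u, by rw [firstZero_succ, hf0]; rfl⟩
  | succ n ih =>
    obtain ⟨k, rfl⟩ := Nat.exists_eq_add_one_of_ne_zero (by omega : k ≠ 0)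
    obtain ⟨v, u, hf0, hv⟩ := hf 0 (Nat.zero_le _)
    obtain ⟨v, rfl⟩ := Nat.exists_eq_succ_of_ne_zero (mt hv.1 (by omega))
    obtain ⟨U, hU⟩ := ih (f := fun m => f (m + 1)) (k := k)
      (fun m hm => (hf (m + 1) (by omega)).imp fun _ => Exists.imp fun _ => And.imp_right
        fun h => h.trans (by omega)) (by omega)
    exact ⟨max u U, by rw [firstZero_succ, hf0, hU]; rfl⟩

theorem eventually_firstZero_eq {F : ℕ → ℕ → Option (ℕ × ℕ)} {n : ℕ} {v u : ℕ → ℕ}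
    (hv : ∀ m ≤ n, (v m = 0 ↔ m = n))
    (hF : ∀ m ≤ n, ∀ᶠ s in atTop, F s m = some (v m, u m)) :
    ∃ U, ∀ᶠ s in atTop, firstZero (F s) s = some (n, U) := by
  obtain ⟨t, ht⟩ := ((eventually_gt_atTop n).and
    ((Set.finite_Iic n).eventually_all.2 hF)).exists_forall_of_atTop
  obtain ⟨U, hU⟩ := exists_firstZero_eq (f := F t)
    (fun m hmn => ⟨v m, u m, (ht t le_rfl).2 m hmn, hv m hmn⟩) (ht t le_rfl).1
  refine ⟨U, eventually_atTop.2 ⟨t, fun s hts => firstZero_congr hU (fun m hmn => ?_)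
    (ht s hts).1⟩⟩
  rw [(ht s hts).2 m hmn, (ht t le_rfl).2 m hmn]

theorem mem_rfind_decide_eq_zero {p : ℕ →. ℕ} {n : ℕ} :
    n ∈ Nat.rfind (fun m => (fun v => decide (v = 0)) <$> p m) ↔
      ∀ m ≤ n, ∃ v ∈ p m, (v = 0 ↔ m = n) := by
  refine Nat.mem_rfind.trans ⟨fun ⟨hn, hlt⟩ m hmn => ?_, fun h => ⟨?_, fun hmn => ?_⟩⟩
  · rcases hmn.lt_or_eq with hmn | rfl
    · obtain ⟨v, hv, hv0⟩ := (Part.mem_map_iff _).1 (hlt hmn)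
      exact ⟨v, hv, iff_of_false (by simpa using hv0) hmn.ne⟩
    · obtain ⟨v, hv, hv0⟩ := (Part.mem_map_iff _).1 hn
      exact ⟨v, hv, iff_of_true (by simpa using hv0) rfl⟩
  · obtain ⟨v, hv, hv0⟩ := h n le_rfl
    exact (Part.mem_map_iff _).2 ⟨v, hv, by simpa using hv0.2 rfl⟩
  · obtain ⟨v, hv, hv0⟩ := h _ hmn.le
    exact (Part.mem_map_iff _).2 ⟨v, hv, by simpa using fun h0 => hmn.ne (hv0.1 h0)⟩

/-- `x s = some (v, u)` says that at stage `s` the computation, run with the oracle `D s`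
in place of `A`, halts with value `v` after querying the oracle only below `u`. -/
structure IsUseApprox (A : Set ℕ) (D : ℕ → ℕ → Bool) (p : Part ℕ)
    (x : ℕ → Option (ℕ × ℕ)) : Prop where
  mem {t v u : ℕ} : x t = some (v, u) → AgreesBelow A D t u → v ∈ p
  stable {t v u : ℕ} : x t = some (v, u) → AgreesBelow A D t u →
    ∀ {s : ℕ}, t ≤ s → x s = some (v, u)
  eventually : p.Dom → ∃ r, ∀ᶠ s in atTop, x s = some r

def useBind (x : Option (ℕ × ℕ)) (k : ℕ → Option (ℕ × ℕ)) : Option (ℕ × ℕ) :=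
  x.bind fun p => (k p.1).map fun q => (q.1, max p.2 q.2)

open Primrec in
theorem Primrec.useBind {α : Type*} [Primcodable α] {x : α → Option (ℕ × ℕ)}
    {k : α → ℕ → Option (ℕ × ℕ)} (hx : Primrec x) (hk : Primrec₂ k) :
    Primrec fun a => useBind (x a) (k a) :=
  option_bind hx <| (option_map (hk.comp fst (fst.comp snd)) <|
    ((fst.comp snd).pair (nat_max.comp (snd.comp (snd.comp fst)) (snd.comp snd))).to₂).to₂

theorem useBind_eq_some {x : Option (ℕ × ℕ)} {k : ℕ → Option (ℕ × ℕ)} {v u : ℕ} :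
    useBind x k = some (v, u) ↔
      ∃ a u₁ u₂, x = some (a, u₁) ∧ k a = some (v, u₂) ∧ u = max u₁ u₂ := by
  simp only [useBind, Option.bind_eq_some_iff, Option.map_eq_some_iff, Prod.exists,
    Prod.mk.injEq]
  constructor
  · rintro ⟨a, u₁, hx, v, u₂, hk, rfl, rfl⟩
    exact ⟨a, u₁, u₂, hx, hk, rfl⟩
  · rintro ⟨a, u₁, u₂, hx, hk, rfl⟩
    exact ⟨a, u₁, hx, v, u₂, hk, rfl, rfl⟩

def precApprox (Hf Hg : ℕ → ℕ → Option (ℕ × ℕ)) (s m : ℕ) : Option (ℕ × ℕ) :=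
  m.unpair.2.rec (Hf s m.unpair.1) fun y IH =>
    useBind IH fun i => Hg s (Nat.pair m.unpair.1 (Nat.pair y i))

open Primrec in
theorem Primrec.precApprox {Hf Hg : ℕ → ℕ → Option (ℕ × ℕ)} (hf : Primrec₂ Hf)
    (hg : Primrec₂ Hg) : Primrec₂ (precApprox Hf Hg) :=
  (nat_rec' (snd.comp (unpair.comp snd)) (hf.comp fst (fst.comp (unpair.comp snd)))
    (Primrec.useBind (snd.comp snd) (hg.comp (fst.comp (fst.comp fst))
      (Primrec₂.natPair.comp (fst.comp (unpair.comp (snd.comp (fst.comp fst))))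
        (Primrec₂.natPair.comp (fst.comp (snd.comp fst)) snd))).to₂).to₂).to₂

def rfindApprox (Hf : ℕ → ℕ → Option (ℕ × ℕ)) (s a : ℕ) : Option (ℕ × ℕ) :=
  firstZero (fun n => Hf s (Nat.pair a n)) s

open Primrec in
theorem Primrec.rfindApprox {Hf : ℕ → ℕ → Option (ℕ × ℕ)} (hf : Primrec₂ Hf) :
    Primrec₂ (rfindApprox Hf) :=
  (list_foldr (list_map (list_range.comp fst)
      (hf.comp (fst.comp fst) (Primrec₂.natPair.comp (snd.comp fst) snd)).to₂)
    (const none) (Primrec.firstZeroStep.comp (fst.comp snd) (snd.comp snd)).to₂).to₂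

section UseApprox

variable {A : Set ℕ} {D : ℕ → ℕ → Bool}

theorem isUseApprox_some (v : ℕ) : IsUseApprox A D (Part.some v) fun _ => some (v, 0) where
  mem h _ := by cases h; exact Part.mem_some v
  stable h _ _ _ := h
  eventually _ := ⟨(v, 0), Eventually.of_forall fun _ => rfl⟩

theorem IsEnumeration.isUseApprox_chi (hD : IsEnumeration A D) (n : ℕ) :
    IsUseApprox A D (chi A n) fun s => some (bif D s n then 1 else 0, n + 1) := by
  classical
  have hval : ∀ s, (D s n = true ↔ n ∈ A) →
      (bif D s n then 1 else 0) = if n ∈ A then 1 else 0 := fun s hs => by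
    cases h : D s n <;> simp_all
  refine ⟨fun h ht => ?_, fun h ht s hts => ?_, fun _ => ?_⟩
  · cases h
    rw [hval _ (ht n n.lt_succ_self)]
    exact Part.mem_some _
  · cases h
    rw [hval _ (ht n n.lt_succ_self), hval _ (hD.iff_of_le (ht n n.lt_succ_self) hts)]
  · exact ⟨_, (hD.eventually_iff n).mono fun s hs => by rw [hval s hs]⟩

namespace IsUseApprox

variable {p : Part ℕ} {x : ℕ → Option (ℕ × ℕ)}

theorem exists_eventually_eq (hD : IsEnumeration A D) (hx : IsUseApprox A D p x)
    (hp : p.Dom) : ∃ v ∈ p, ∃ u, ∀ᶠ s in atTop, x s = some (v, u) := by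
  obtain ⟨⟨v, u⟩, hev⟩ := hx.eventually hp
  obtain ⟨t, ht, hagr⟩ := (hev.and (hD.eventually_agreesBelow u)).exists
  exact ⟨v, hx.mem ht hagr, u, hev⟩

theorem bind (hD : IsEnumeration A D) (hx : IsUseApprox A D p x) {q : ℕ → Part ℕ}
    {k : ℕ → ℕ → Option (ℕ × ℕ)} (hk : ∀ a ∈ p, IsUseApprox A D (q a) fun s => k s a) :
    IsUseApprox A D (p.bind q) fun s => useBind (x s) (k s) where
  mem h ht := by
    obtain ⟨a, u₁, u₂, hxa, hka, rfl⟩ := useBind_eq_some.1 h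
    have ha := hx.mem hxa (agreesBelow_max_iff.1 ht).1
    exact Part.mem_bind_iff.2 ⟨a, ha, (hk a ha).mem hka (agreesBelow_max_iff.1 ht).2⟩
  stable h ht s hts := by
    obtain ⟨a, u₁, u₂, hxa, hka, rfl⟩ := useBind_eq_some.1 h
    have ha := hx.mem hxa (agreesBelow_max_iff.1 ht).1
    exact useBind_eq_some.2 ⟨a, u₁, u₂, hx.stable hxa (agreesBelow_max_iff.1 ht).1 hts,
      (hk a ha).stable hka (agreesBelow_max_iff.1 ht).2 hts, rfl⟩
  eventually hp := by
    obtain ⟨hpd, hqd⟩ := hp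
    obtain ⟨a, ha, u₁, hev₁⟩ := hx.exists_eventually_eq hD hpd
    obtain ⟨⟨v, u₂⟩, hev₂⟩ := (hk a ha).eventually (Part.get_eq_of_mem ha hpd ▸ hqd)
    exact ⟨(v, max u₁ u₂), (hev₁.and hev₂).mono fun s ⟨h₁, h₂⟩ =>
      useBind_eq_some.2 ⟨a, u₁, u₂, h₁, h₂, rfl⟩⟩

end IsUseApprox

theorem isUseApprox_pair (hD : IsEnumeration A D) {f g : ℕ →. ℕ}
    {Hf Hg : ℕ → ℕ → Option (ℕ × ℕ)} (hf : ∀ n, IsUseApprox A D (f n) fun s => Hf s n)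
    (hg : ∀ n, IsUseApprox A D (g n) fun s => Hg s n) (n : ℕ) :
    IsUseApprox A D (Nat.pair <$> f n <*> g n) fun s =>
      useBind (Hf s n) fun a => useBind (Hg s n) fun b => some (Nat.pair a b, 0) := by
  have hseq : Nat.pair <$> f n <*> g n = (f n).bind fun a => (g n).bind fun b =>
      Part.some (Nat.pair a b) := by
    simp [Seq.seq, Part.bind_some_eq_map]
  rw [hseq]
  exact (hf n).bind hD fun a _ => (hg n).bind hD fun b _ => isUseApprox_some _

theorem isUseApprox_prec (hD : IsEnumeration A D) {f g : ℕ →. ℕ}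
    {Hf Hg : ℕ → ℕ → Option (ℕ × ℕ)} (hf : ∀ n, IsUseApprox A D (f n) fun s => Hf s n)
    (hg : ∀ n, IsUseApprox A D (g n) fun s => Hg s n) (m : ℕ) :
    IsUseApprox A D
      (Nat.unpaired (fun a n =>
        n.rec (f a) fun y IH => do let i ← IH; g (Nat.pair a (Nat.pair y i))) m)
      fun s => precApprox Hf Hg s m := by
  simp only [Nat.unpaired, precApprox]
  induction m.unpair.2 with
  | zero => exact hf _
  | succ n ih => exact ih.bind hD fun _ _ => hg _

theorem isUseApprox_rfind (hD : IsEnumeration A D) {f : ℕ →. ℕ}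
    {Hf : ℕ → ℕ → Option (ℕ × ℕ)} (hf : ∀ n, IsUseApprox A D (f n) fun s => Hf s n) (a : ℕ) :
    IsUseApprox A D (Nat.rfind fun n => (fun m => decide (m = 0)) <$> f (Nat.pair a n))
      fun s => rfindApprox Hf s a where
  mem h ht := by
    obtain ⟨-, hm⟩ := firstZero_eq_some h
    refine mem_rfind_decide_eq_zero.2 fun m hmn => ?_
    obtain ⟨v, u, hu, hv, hvn⟩ := hm m hmn
    exact ⟨v, (hf _).mem hv (ht.mono hu), hvn⟩
  stable h ht s hts := by
    obtain ⟨hn, hm⟩ := firstZero_eq_some h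
    refine firstZero_congr h (fun m hmn => ?_) (hn.trans_le hts)
    obtain ⟨v, u, hu, hv, -⟩ := hm m hmn
    rw [hv, (hf _).stable hv (ht.mono hu) hts]
  eventually hp := by
    obtain ⟨n, hn⟩ := Part.dom_iff_mem.1 hp
    have hev : ∀ m ≤ n, ∃ v u, (v = 0 ↔ m = n) ∧
        ∀ᶠ s in atTop, Hf s (Nat.pair a m) = some (v, u) := fun m hmn => by
      obtain ⟨v, hv, hvn⟩ := mem_rfind_decide_eq_zero.1 hn m hmn
      obtain ⟨w, hw, u, hev⟩ := (hf _).exists_eventually_eq hD (Part.dom_iff_mem.2 ⟨v, hv⟩)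
      exact ⟨w, u, Part.mem_unique hw hv ▸ hvn, hev⟩
    choose! v u hvn hev using hev
    obtain ⟨U, hU⟩ := eventually_firstZero_eq hvn hev
    exact ⟨(n, U), hU⟩

theorem exists_useApprox_of_primrec {f : ℕ → ℕ} (hf : Primrec f) :
    ∃ H : ℕ → ℕ → Option (ℕ × ℕ), Primrec₂ H ∧
      ∀ n, IsUseApprox A D (Part.some (f n)) fun s => H s n :=
  ⟨fun _ n => some (f n, 0),
    (Primrec.option_some.comp ((hf.comp Primrec.snd).pair (Primrec.const 0))).to₂,
    fun n => isUseApprox_some (f n)⟩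

theorem RecursiveInOracle.exists_useApprox (hDp : Primrec₂ D) (hD : IsEnumeration A D)
    {h : ℕ →. ℕ} (hh : RecursiveInOracle (chi A) h) :
    ∃ H : ℕ → ℕ → Option (ℕ × ℕ), Primrec₂ H ∧
      ∀ n, IsUseApprox A D (h n) fun s => H s n := by
  induction hh with
  | oracle =>
    exact ⟨_, (Primrec.option_some.comp ((Primrec.cond hDp (Primrec.const 1)
      (Primrec.const 0)).pair (Primrec.succ.comp Primrec.snd))).to₂, hD.isUseApprox_chi⟩
  | zero => exact exists_useApprox_of_primrec (Primrec.const 0)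
  | succ => exact exists_useApprox_of_primrec Primrec.succ
  | left => exact exists_useApprox_of_primrec (Primrec.fst.comp Primrec.unpair)
  | right => exact exists_useApprox_of_primrec (Primrec.snd.comp Primrec.unpair)
  | pair _ _ ihf ihg =>
    obtain ⟨Hf, hfp, hf⟩ := ihf
    obtain ⟨Hg, hgp, hg⟩ := ihg
    refine ⟨_, ?_, isUseApprox_pair hD hf hg⟩
    exact (Primrec.useBind hfp <| (Primrec.useBind (hgp.comp (Primrec.fst.comp Primrec.fst)
      (Primrec.snd.comp Primrec.fst)) <| (Primrec.option_some.comp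
        ((Primrec₂.natPair.comp (Primrec.snd.comp Primrec.fst) Primrec.snd).pair
          (Primrec.const 0))).to₂).to₂).to₂
  | comp _ _ ihf ihg =>
    obtain ⟨Hf, hfp, hf⟩ := ihf
    obtain ⟨Hg, hgp, hg⟩ := ihg
    exact ⟨fun s n => useBind (Hg s n) (Hf s),
      (Primrec.useBind hgp (hfp.comp (Primrec.fst.comp Primrec.fst) Primrec.snd).to₂).to₂,
      fun n => (hg n).bind hD fun a _ => hf a⟩
  | prec _ _ ihf ihg =>
    obtain ⟨Hf, hfp, hf⟩ := ihf
    obtain ⟨Hg, hgp, hg⟩ := ihg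
    exact ⟨_, Primrec.precApprox hfp hgp, isUseApprox_prec hD hf hg⟩
  | rfind _ ihf =>
    obtain ⟨Hf, hfp, hf⟩ := ihf
    exact ⟨_, Primrec.rfindApprox hfp, isUseApprox_rfind hD hf⟩

end UseApprox

theorem Primrec.sum_range {α : Type*} [Primcodable α] {f : α → ℕ → ℕ} (hf : Primrec₂ f) :
    Primrec₂ fun a u => ∑ q ∈ Finset.range u, f a q := by
  refine (Primrec.nat_rec' Primrec.snd (Primrec.const 0) (Primrec.nat_add.comp
    (Primrec.snd.comp Primrec.snd) (hf.comp (Primrec.fst.comp Primrec.fst)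
      (Primrec.fst.comp Primrec.snd))).to₂).to₂.of_eq fun a u => ?_
  induction u with
  | zero => rfl
  | succ u ih => simp [Finset.sum_range_succ, ← ih]

namespace IsEnumeration

variable {A : Set ℕ} {D : ℕ → ℕ → Bool}

theorem sum_eq_sum_iff [DecidablePred (· ∈ A)] (hD : IsEnumeration A D) (t u : ℕ) :
    ∑ q ∈ Finset.range u, (bif D t q then 1 else 0) =
        ∑ q ∈ Finset.range u, (if q ∈ A then 1 else 0) ↔
      AgreesBelow A D t u := by
  rw [Finset.sum_eq_sum_iff_of_le fun q _ => ?_]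
  · refine forall_congr' fun q => ?_
    rw [Finset.mem_range]
    refine imp_congr_right fun _ => ?_
    by_cases hq : q ∈ A <;> cases h : D t q <;> simp_all
  · cases h : D t q
    · exact Nat.zero_le _
    · simp [hD.sound h]

theorem exists_recursiveInOracle_confirm (hDp : Primrec₂ D) (hD : IsEnumeration A D)
    {c : ℕ → ℕ → Option ℕ} (hc : Computable₂ c) :
    ∃ f : ℕ → ℕ, (RecursiveInOracle (chi A) fun m => Part.some (f m)) ∧
      ∀ x t, f (Nat.pair x t) = 0 ↔ ∃ u, c x t = some u ∧ AgreesBelow A D t u := by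
  classical
  -- `D t ⊆ A`, so `D t` agrees with `A` below `u` iff both have equally many elements there
  set test : ℕ → ℕ → ℕ := fun m n => (c m.unpair.1 m.unpair.2).elim 1 fun u =>
    if n = ∑ q ∈ Finset.range u, bif D m.unpair.2 q then 1 else 0 then 0 else 1
  have hcm : Computable fun m : ℕ => c m.unpair.1 m.unpair.2 :=
    hc.comp (Computable.fst.comp Computable.unpair) (Computable.snd.comp Computable.unpair)
  have htest : Computable₂ test := by
    have hcount : Primrec₂ fun t u => ∑ q ∈ Finset.range u, bif D t q then 1 else 0 :=
      Primrec.sum_range (Primrec.cond hDp (Primrec.const 1) (Primrec.const 0))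
    refine Computable.of_eq (Computable.option_casesOn (hcm.comp Computable.fst)
      (Computable.const 1) (Primrec.ite (Primrec.eq.comp (Primrec.snd.comp Primrec.fst)
        (hcount.comp (Primrec.snd.comp (Primrec.unpair.comp (Primrec.fst.comp Primrec.fst)))
          Primrec.snd)) (Primrec.const 0) (Primrec.const 1)).to_comp.to₂) fun p => ?_
    rcases h : c p.1.unpair.1 p.1.unpair.2 with _ | u <;> simp [test, h]
  refine ⟨fun m => test m
      (∑ q ∈ Finset.range ((c m.unpair.1 m.unpair.2).getD 0), if q ∈ A then 1 else 0),
    RecursiveInOracle.comp₂ htest (RecursiveInOracle.of_computable Computable.id)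
      (RecursiveInOracle.comp_total RecursiveInOracle.sum_range
        (RecursiveInOracle.of_computable (Computable.option_getD hcm (Computable.const 0)))),
    fun x t => ?_⟩
  simp only [test, Nat.unpair_pair]
  rcases c x t with _ | u <;> simp [← hD.sum_eq_sum_iff, eq_comm]

theorem recursiveInOracle_chi_of_confirmed {B : Set ℕ} (hDp : Primrec₂ D)
    (hD : IsEnumeration A D) {c : ℕ → ℕ → Option ℕ} (hc : Computable₂ c)
    {K : ℕ → ℕ → Bool} (hK : Computable₂ K)
    (hex : ∀ x, ∃ t u, c x t = some u ∧ AgreesBelow A D t u)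
    (hB : ∀ x t u, c x t = some u → AgreesBelow A D t u → (x ∈ B ↔ K x t = true)) :
    RecursiveInOracle (chi A) (chi B) := by
  obtain ⟨f, hf, hf0⟩ := hD.exists_recursiveInOracle_confirm hDp hc
  refine RecursiveInOracle.of_eq (RecursiveInOracle.rfind_bind hf
    (K := fun x t => bif K x t then 1 else 0)
    (Computable.cond hK (Computable.const 1) (Computable.const 0)).to₂) fun x => ?_
  obtain ⟨t, u, hcu, hagr⟩ := hex x
  obtain ⟨t₀, ht₀⟩ : ∃ t₀, t₀ ∈ Nat.rfind fun t => Part.some (decide (f (Nat.pair x t) = 0)) :=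
    Part.dom_iff_mem.1 <| Nat.rfind_dom.2
      ⟨t, Part.mem_some_iff.2 (decide_eq_true ((hf0 x t).2 ⟨u, hcu, hagr⟩)).symm,
        fun _ => Part.some_dom _⟩
  obtain ⟨u₀, hcu₀, hagr₀⟩ := (hf0 x t₀).1 (of_decide_eq_true (Part.mem_some_iff.1
    (Nat.rfind_spec ht₀)).symm)
  rw [Part.eq_some_iff.2 ht₀, Part.bind_some, chi, hB x t₀ u₀ hcu₀ hagr₀]
  cases K x t₀ <;> simp

end IsEnumeration

theorem Precomplete.exists_fixed_point₂ {S : Type*} {γ : ℕ → S} (hγ : Precomplete γ)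
    {Ψ : ℕ →. ℕ} (hΨ : Nat.Partrec Ψ) :
    ∃ ν : ℕ → ℕ, Computable ν ∧ ∀ x, ∀ y ∈ Ψ (Nat.pair x (ν x)), γ (ν x) = γ y := by
  -- `d` totalizes the diagonal `m ↦ φ_{m.1}(m)`; `ν x` applies `d` to `⟨e x, x⟩`, where
  -- `e x` is an index of `m ↦ Ψ(x, d m)`.
  obtain ⟨d, hd, hdγ⟩ := hγ (fun m => phi m.unpair.1 m) <| Partrec.nat_iff.1 <|
    Nat.Partrec.Code.eval_part.comp ((Computable.ofNat _).comp
      (Computable.fst.comp Computable.unpair)) Computable.id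
  obtain ⟨c, hc⟩ := Nat.Partrec.Code.exists_code.1 <| Partrec.nat_iff.1 <|
    (Partrec.nat_iff.2 hΨ).comp (Primrec₂.natPair.to_comp.comp
      (Computable.fst.comp Computable.unpair) (hd.comp (Computable.snd.comp Computable.unpair)))
  have he : Computable fun x => Encodable.encode (c.curry x) :=
    (Primrec.encode.comp (Nat.Partrec.Code.primrec₂_curry.comp (Primrec.const c)
      Primrec.id)).to_comp
  refine ⟨fun x => d (Nat.pair (Encodable.encode (c.curry x)) x),
    hd.comp (Primrec₂.natPair.to_comp.comp he Computable.id), fun x y hy => hdγ _ y ?_⟩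
  simpa [phi, Nat.Partrec.Code.eval_curry, hc] using hy

/-- The function `Ψ` of the proof idea, with `E` enumerating `∅'` and `G` approximating `g`. -/
def valueAtEntry (E : ℕ → ℕ → Bool) (G : ℕ → ℕ → Option (ℕ × ℕ)) : ℕ →. ℕ := fun m =>
  (Nat.rfind fun s => Part.some (E s m.unpair.1)).bind fun s =>
    Part.ofOption ((G s m.unpair.2).map Prod.fst)

theorem partrec_valueAtEntry {E : ℕ → ℕ → Bool} {G : ℕ → ℕ → Option (ℕ × ℕ)}
    (hE : Primrec₂ E) (hG : Primrec₂ G) : Nat.Partrec (valueAtEntry E G) :=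
  Partrec.nat_iff.1 <| Partrec.bind (Partrec.rfind (hE.to_comp.comp Computable.snd
    (Computable.fst.comp (Computable.unpair.comp Computable.fst))).to₂.partrec₂)
    (Computable.ofOption (Primrec.option_map (hG.comp Primrec.snd
      (Primrec.snd.comp (Primrec.unpair.comp Primrec.fst)))
        (Primrec.fst.comp Primrec.snd).to₂).to_comp).to₂

theorem IsEnumeration.mem_iff_of_agreesBelow {A B : Set ℕ} {D E : ℕ → ℕ → Bool}
    {G : ℕ → ℕ → Option (ℕ × ℕ)} {g : ℕ → ℕ} {x y t v u : ℕ} (hE : IsEnumeration B E)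
    (hG : IsUseApprox A D (Part.some (g y)) fun s => G s y)
    (hy : g y ∉ valueAtEntry E G (Nat.pair x y))
    (ht : G t y = some (v, u)) (hagr : AgreesBelow A D t u) : x ∈ B ↔ E t x = true := by
  refine ⟨fun hx => ?_, hE.sound⟩
  obtain ⟨s, hs⟩ : ∃ s, s ∈ Nat.rfind fun s => Part.some (E s x) :=
    Part.dom_iff_mem.1 <| Nat.rfind_dom.2 <| (hE.complete hx).imp fun s hs =>
      ⟨Part.mem_some_iff.2 hs.symm, fun _ => trivial⟩
  rcases le_or_gt s t with hst | hts
  · exact hE.mono hst (Part.mem_some_iff.1 (Nat.rfind_spec hs)).symm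
  · refine absurd ?_ hy
    have hv : v = g y := Part.mem_some_iff.1 (hG.mem ht hagr)
    refine Part.mem_bind_iff.2 ⟨s, by simpa using hs, ?_⟩
    simp [hG.stable ht hagr hts.le, hv]

theorem arslanov_precomplete_general {S : Type*} (γ : ℕ → S)
    (hpre : Precomplete γ) (A : Set ℕ) (hA : CE A)
    (hinc : ¬ RecursiveInOracle (chi A) (chi haltingSet))
    (g : ℕ → ℕ) (hg : RecursiveInOracle (chi A) (fun n => Part.some (g n))) :
    ∃ n : ℕ, γ (g n) = γ n := by
  by_contra! hfix
  obtain ⟨D, hDp, hD⟩ := hA.exists_enumeration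
  obtain ⟨E, hEp, hE⟩ := ce_haltingSet.exists_enumeration
  obtain ⟨G, hGp, hG⟩ := hg.exists_useApprox hDp hD
  obtain ⟨ν, hν, hνfix⟩ := hpre.exists_fixed_point₂ (partrec_valueAtEntry hEp hGp)
  have hνG : Computable₂ fun x t => G t (ν x) :=
    hGp.to_comp.comp₂ Computable.snd.to₂ (hν.comp Computable.fst).to₂
  refine hinc <| hD.recursiveInOracle_chi_of_confirmed hDp
    (c := fun x t => (G t (ν x)).map Prod.snd)
    (Computable.option_map hνG (Computable.snd.comp Computable.snd).to₂).to₂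
    (K := fun x t => E t x) (hEp.to_comp.comp Computable.snd Computable.fst).to₂
    (fun x => ?_) fun x t u h hagr => ?_
  · obtain ⟨⟨v, u⟩, hev⟩ := (hG (ν x)).eventually trivial
    obtain ⟨t, ht, hagr⟩ := (hev.and (hD.eventually_agreesBelow u)).exists
    exact ⟨t, u, by simp [ht], hagr⟩
  · obtain ⟨⟨v, u'⟩, hGt, rfl⟩ := Option.map_eq_some_iff.1 h
    exact hE.mem_iff_of_agreesBelow (hG (ν x)) (fun h => hfix (ν x) (hνfix x _ h).symm)
      hGt hagr

/-- Arslanov's completeness criterion for precomplete numberings: if `A` is a c.e. set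
to which the halting set is not Turing reducible, then every total `A`-computable
function has a fixed point modulo `~γ`. -/
theorem arslanov_precomplete {S : Type*} (γ : ℕ → S) (hsurj : Function.Surjective γ)
    (hpre : Precomplete γ) (A : Set ℕ) (hA : CE A)
    (hinc : ¬ RecursiveInOracle (chi A) (chi haltingSet))
    (g : ℕ → ℕ) (hg : RecursiveInOracle (chi A) (fun n => Part.some (g n))) :
    ∃ n : ℕ, γ (g n) = γ n :=
  arslanov_precomplete_general γ hpre A hA hinc g hg
end
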